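/- Let A be a commutative unital R-algebra, D = (D₁,…,Dₙ) R-derivations of A, and P(ξ) = a₀ + Σ_{k=1}^d P_k(ξ) a polynomial over A of degree d ≥ 1. If u ∈ A satisfies P(D)(u^m) = 0 for all 1 ≤ m ≤ d+1, then a₀·u^{d+1} = 0. -/

import Mathlib

/-- The differential operator `P(D)` obtained from `P ∈ A[ξ₁,…,ξₙ]` by substituting the
derivations `Dᵢ` for `ξᵢ`, with the coefficients written on the left. -/
noncomputable def mvDiffOp {R A : Type*} [CommRing R] [CommRing A] [Algebra R A]
    {n : ℕ} (D : Fin n → Derivation R A A) (P : MvPolynomial (Fin n) A) :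
    Module.End R A :=
  ∑ m ∈ P.support,
    LinearMap.mulLeft R (P.coeff m) *
      ((List.finRange n).map fun i => (D i).toLinearMap ^ m i).prod

/-!
If `L` is a composite of derivations of total order `≤ k`, then by Leibniz
`L (u ^ m) = ∑_{j ≤ k} m (m - 1) ⋯ (m - j + 1) • g j * u ^ (m - j)` with coefficients `g j`
independent of `m`, and `g 0 = L 1`; by linearity the same holds for `L = P(D)` with `k = d`.
Multiplying by `u ^ (d + 1 - m)` shows that `m ↦ u ^ (d + 1 - m) * P(D) (u ^ m)` agrees on
`0, …, d + 1` with a polynomial in `m` of degree `≤ d`, whose `(d + 1)`-st forward difference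
vanishes. As it is zero at `m = 1, …, d + 1`, it is zero at `m = 0`, i.e. `P(D) 1 * u ^ (d + 1) = 0`,
and `P(D) 1 = a₀` because a derivation kills `1`.
-/

open Finset

theorem fwdDiff_iter_smul_const {M G R : Type*} [AddCommMonoid M] [AddCommGroup G] [Ring R]
    [Module R G] (h : M) (f : M → R) (g : G) (n : ℕ) :
    (fwdDiff h)^[n] (fun y ↦ f y • g) = fun y ↦ (fwdDiff h)^[n] f y • g := by
  induction n generalizing f with
  | zero => rfl
  | succ n ih =>
    rw [Function.iterate_succ_apply, Function.iterate_succ_apply, fwdDiff_smul_const]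
    exact ih _

theorem fwdDiff_iter_sum_descFactorial_smul_apply_zero {G : Type*} [AddCommGroup G]
    (c : ℕ → G) {d N : ℕ} (h : d < N) :
    (fwdDiff 1)^[N] (fun m : ℕ ↦ ∑ j ∈ range (d + 1), m.descFactorial j • c j) 0 = 0 := by
  have hchoose : (fun m : ℕ ↦ ∑ j ∈ range (d + 1), m.descFactorial j • c j) =
      ∑ j ∈ range (d + 1), fun m : ℕ ↦ (m.choose j : ℤ) • (j.factorial • c j) := by
    ext m
    simp only [Finset.sum_apply, Nat.descFactorial_eq_factorial_mul_choose, mul_comm _ (m.choose _),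
      mul_nsmul, natCast_zsmul, smul_comm (m.choose _)]
  rw [hchoose, fwdDiff_iter_finsetSum, Finset.sum_apply]
  refine sum_eq_zero fun j hj ↦ ?_
  rw [fwdDiff_iter_smul_const]
  dsimp only
  rw [fwdDiff_iter_choose_zero, if_neg (by have := mem_range.1 hj; omega), zero_smul]

theorem eq_zero_of_sum_descFactorial_smul_eq_zero {G : Type*} [AddCommGroup G] {d : ℕ}
    (c : ℕ → G) (h : ∀ m, 1 ≤ m → m ≤ d + 1 → ∑ j ∈ range (d + 1), m.descFactorial j • c j = 0) :
    c 0 = 0 := by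
  have hΔ := fwdDiff_iter_sum_descFactorial_smul_apply_zero c (Nat.lt_succ_self d)
  rw [fwdDiff_iter_eq_sum_shift, sum_range_succ', sum_eq_zero fun m hm ↦ ?_] at hΔ
  · simpa [sum_range_succ', Nat.zero_descFactorial_succ] using hΔ
  · simp only [zero_add, smul_eq_mul, mul_one]
    rw [h (m + 1) (by omega) (by have := mem_range.1 hm; omega), smul_zero]

section PowExpansion

variable {R A : Type*} [CommRing R] [CommRing A] [Algebra R A]

variable (R) in
/-- The operators acting on the powers of `u` like a differential operator of order `≤ k`. -/
def powExpansions (u : A) (k : ℕ) : Submodule A (Module.End R A) where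
  carrier := {L | ∃ g : ℕ → A, ∀ m : ℕ,
    L (u ^ m) = ∑ j ∈ range (k + 1), m.descFactorial j • (g j * u ^ (m - j))}
  zero_mem' := ⟨0, by simp⟩
  add_mem' := by
    rintro L L' ⟨g, hg⟩ ⟨g', hg'⟩
    exact ⟨g + g', fun m ↦ by simp [hg, hg', add_mul, ← sum_add_distrib]⟩
  smul_mem' := by
    rintro a L ⟨g, hg⟩
    refine ⟨a • g, fun m ↦ ?_⟩
    rw [LinearMap.smul_apply, hg, smul_sum]
    exact sum_congr rfl fun j _ ↦ by simp only [Pi.smul_apply, smul_eq_mul, nsmul_eq_mul]; ring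

variable {u : A}

theorem one_mem_powExpansions : (1 : Module.End R A) ∈ powExpansions R u 0 :=
  ⟨fun _ ↦ 1, fun m ↦ by simp⟩

theorem powExpansions_mono : Monotone (powExpansions R u) := by
  intro k k' hk L ⟨g, hg⟩
  refine ⟨fun j ↦ if j ≤ k then g j else 0, fun m ↦ ?_⟩
  rw [hg, ← sum_subset (range_subset_range.2 (Nat.succ_le_succ hk)) fun j _ hj ↦ ?_]
  · exact sum_congr rfl fun j hj ↦ by simp [Nat.lt_succ_iff.1 (mem_range.1 hj)]
  · simp [Nat.lt_succ_iff.not.1 (by simpa using hj)]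

theorem derivation_mul_mem_powExpansions (D : Derivation R A A) {k : ℕ} {L : Module.End R A}
    (hL : L ∈ powExpansions R u k) : D.toLinearMap * L ∈ powExpansions R u (k + 1) := by
  obtain ⟨g, hg⟩ := hL
  refine ⟨fun j ↦ (if j ≤ k then D (g j) else 0) + (if j = 0 then 0 else g (j - 1) * D u),
    fun m ↦ ?_⟩
  have hterm : ∀ j, D (m.descFactorial j • (g j * u ^ (m - j))) =
      m.descFactorial j • (D (g j) * u ^ (m - j)) +
      m.descFactorial (j + 1) • (g j * D u * u ^ (m - (j + 1))) := by
    intro j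
    rw [map_nsmul, Derivation.leibniz, Derivation.leibniz_pow, Nat.descFactorial_succ,
      ← Nat.sub_sub]
    simp only [smul_eq_mul, nsmul_eq_mul, mul_smul]
    ring
  change D (L (u ^ m)) = _
  rw [hg, map_sum, sum_congr rfl fun j _ ↦ hterm j, sum_add_distrib]
  simp only [add_mul, smul_add, sum_add_distrib]
  congr 1
  · rw [eq_comm, sum_range_succ _ (k + 1), if_neg (by omega), zero_mul, smul_zero, add_zero]
    exact sum_congr rfl fun j hj ↦ by rw [if_pos (Nat.lt_succ_iff.1 (mem_range.1 hj))]
  · rw [eq_comm, sum_range_succ' _ (k + 1), if_pos rfl, zero_mul, smul_zero, add_zero]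
    simp [mul_right_comm]

theorem derivation_pow_mul_mem_powExpansions (D : Derivation R A A) {k : ℕ}
    {L : Module.End R A} (hL : L ∈ powExpansions R u k) (e : ℕ) :
    D.toLinearMap ^ e * L ∈ powExpansions R u (e + k) := by
  induction e with
  | zero => simpa using hL
  | succ e ih =>
    rw [pow_succ', mul_assoc, Nat.succ_add]
    exact derivation_mul_mem_powExpansions D ih

theorem list_prod_map_pow_mem_powExpansions {ι : Type*} (D : ι → Derivation R A A) (α : ι → ℕ)
    (l : List ι) :
    (l.map fun i ↦ (D i).toLinearMap ^ α i).prod ∈ powExpansions R u (l.map α).sum := by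
  induction l with
  | nil => exact one_mem_powExpansions
  | cons i l ih => simpa using derivation_pow_mul_mem_powExpansions (D i) ih (α i)

theorem mvDiffOp_mem_powExpansions {n : ℕ} (D : Fin n → Derivation R A A)
    (P : MvPolynomial (Fin n) A) : mvDiffOp D P ∈ powExpansions R u P.totalDegree := by
  refine Submodule.sum_mem _ fun α hα ↦ ?_
  have hdeg : ((List.finRange n).map α).sum ≤ P.totalDegree := by
    rw [← Fin.sum_univ_def, ← Finsupp.sum_fintype α (fun _ e ↦ e) fun _ ↦ rfl]
    exact MvPolynomial.le_totalDegree hα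
  exact Submodule.smul_mem _ (P.coeff α)
    (powExpansions_mono hdeg (list_prod_map_pow_mem_powExpansions D α _))

theorem mul_apply_one_eq_zero_of_mem_powExpansions {k : ℕ} {L : Module.End R A}
    (hL : L ∈ powExpansions R u k) (h : ∀ m, 1 ≤ m → m ≤ k + 1 → L (u ^ m) = 0) :
    L 1 * u ^ (k + 1) = 0 := by
  obtain ⟨g, hg⟩ := hL
  have hg0 : L 1 = g 0 := by simpa [sum_range_succ', Nat.zero_descFactorial_succ] using hg 0
  rw [hg0]
  refine eq_zero_of_sum_descFactorial_smul_eq_zero (d := k) (fun j ↦ g j * u ^ (k + 1 - j))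
    fun m hm hmk ↦ ?_
  calc ∑ j ∈ range (k + 1), m.descFactorial j • (g j * u ^ (k + 1 - j))
      = u ^ (k + 1 - m) * L (u ^ m) := by
        rw [hg, mul_sum]
        refine sum_congr rfl fun j _ ↦ ?_
        rcases le_or_gt j m with hjm | hjm
        · rw [mul_smul_comm, show k + 1 - j = (k + 1 - m) + (m - j) by omega, pow_add]
          ring
        · rw [Nat.descFactorial_eq_zero_iff_lt.2 hjm, zero_smul, zero_smul, mul_zero]
    _ = 0 := by rw [h m hm hmk, mul_zero]

theorem Derivation.pow_apply_one (D : Derivation R A A) (e : ℕ) : (D.toLinearMap ^ e) 1 = if e = 0 then 1 else 0 := by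
  cases e with
  | zero => rfl
  | succ e => rw [pow_succ, Module.End.mul_apply]; simp

theorem list_prod_map_derivation_pow_apply_one {ι : Type*} (D : ι → Derivation R A A) (α : ι → ℕ) (l : List ι) :
    (l.map fun i ↦ (D i).toLinearMap ^ α i).prod 1 = if ∀ i ∈ l, α i = 0 then 1 else 0 := by
  induction l with
  | nil => simp
  | cons i l ih =>
    rw [List.map_cons, List.prod_cons, Module.End.mul_apply, ih]
    split_ifs <;> simp_all [Derivation.pow_apply_one]

theorem mvDiffOp_apply_one {n : ℕ} (D : Fin n → Derivation R A A) (P : MvPolynomial (Fin n) A) :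
    mvDiffOp D P 1 = P.coeff 0 := by
  have hzero (α : Fin n →₀ ℕ) : (∀ i, α i = 0) ↔ α = 0 := by simp [Finsupp.ext_iff]
  simp only [mvDiffOp, LinearMap.sum_apply, Module.End.mul_apply, LinearMap.mulLeft_apply,
    list_prod_map_derivation_pow_apply_one, List.mem_finRange, forall_const, hzero, mul_ite,
    mul_one, mul_zero, sum_ite_eq']
  exact ite_eq_left_iff.2 fun h0 ↦ (MvPolynomial.notMem_support_iff.1 h0).symm

end PowExpansion

theorem stmt4_general {R A : Type*} [CommRing R] [CommRing A] [Algebra R A]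
    (n d : ℕ) (D : Fin n → Derivation R A A)
    (P : MvPolynomial (Fin n) A) (hdeg : P.totalDegree = d)
    (u : A)
    (h : ∀ m : ℕ, 1 ≤ m → m ≤ d + 1 → mvDiffOp D P (u ^ m) = 0) :
    P.coeff 0 * u ^ (d + 1) = 0 := by
  rw [← mvDiffOp_apply_one D P]
  exact mul_apply_one_eq_zero_of_mem_powExpansions (hdeg ▸ mvDiffOp_mem_powExpansions D P) h

/-- Let `A` be a commutative unital `R`-algebra, `D = (D₁,…,Dₙ)` `R`-derivations of `A`,
and `P(ξ)` a polynomial over `A` of degree `d ≥ 1`. If `P(D)(u^m) = 0` for all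
`1 ≤ m ≤ d+1`, then `a₀ u^{d+1} = 0`, where `a₀` is the constant term of `P`. -/
theorem stmt4 {R A : Type*} [CommRing R] [CommRing A] [Algebra R A]
    (n d : ℕ) (hd : 1 ≤ d) (D : Fin n → Derivation R A A)
    (P : MvPolynomial (Fin n) A) (hdeg : P.totalDegree = d)
    (u : A)
    (h : ∀ m : ℕ, 1 ≤ m → m ≤ d + 1 → mvDiffOp D P (u ^ m) = 0) :
    P.coeff 0 * u ^ (d + 1) = 0 :=
  stmt4_general n d D P hdeg u h
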